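/- There exist a nonempty finite alphabet A and a finite set L of patterns over ℤ × ℤ such that the subshift of finite type X = {x : ℤ × ℤ → A | for all g ∈ ℤ × ℤ, g·x disagrees with every pattern in L} is nonempty and Stab(x) = {0} for every x ∈ X (a strongly aperiodic SFT on ℤ²). -/

import Mathlib

/-- The shift action of an additive group `Γ` on configurations: `(g • x) h = x (-g + h)`. -/
def ShiftA {Γ A : Type*} [AddGroup Γ] (g : Γ) (x : Γ → A) : Γ → A :=
  fun h => x (-g + h)

/-- The stabilizer of a configuration under the shift action. -/
def StabA {Γ A : Type*} [AddGroup Γ] (x : Γ → A) : Set Γ :=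
  {g | ShiftA g x = x}

/-- The SFT on `Γ` determined by a set `L` of patterns over `Γ` (a pattern being a finite
domain `D ⊆ Γ` together with a word on it): the configurations `x : Γ → A` all of whose
shifts `g • x` disagree with every pattern of `L`. -/
def SFTA {Γ A : Type*} [AddGroup Γ] (L : Set (Finset Γ × (Γ → A))) : Set (Γ → A) :=
  {x | ∀ g : Γ, ∀ w ∈ L, ∃ k ∈ w.1, ShiftA g x k ≠ w.2 k}

/-!
Each row `j` of a valid tiling encodes a sequence of digits in `{0, 1, 2}`, and the rule between
rows says that row `j + 1` is row `j` multiplied by `q_j ∈ {2, 1/3}`, up to bounded carries passed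
from left to right; no three consecutive digits vanish. Summed over a window, the carries
telescope, so window sums satisfy `S_{j+1} = q_j S_j + O(1)`, while a window of length `3 n` has
sum at least `n`. A period with vertical component `h ≠ 0` would give `S ≈ q_0 ⋯ q_{h-1} S` for
arbitrarily large `S`, although the product `2^a 3^{-b}` is not `1`. A horizontal period `p` makes
the carries cancel exactly over windows of length `3 p`, so these window sums are multiplied by
`2` or `1/3` from row to row while staying in `[1, 6 p]`: two of them coincide, again forcing
`2^a 3^{-b} = 1`. A valid tiling exists: row `j` carries the Beatty digits
`⌊i y_j⌋ - ⌊(i - 1) y_j⌋` along an orbit `y_{j+1} = q_j y_j` inside `[1/3, 2)`.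
-/

open Finset

section Shift

variable {Γ α β : Type*}

theorem mem_stabA_iff_periodic [AddCommGroup Γ] {x : Γ → α} {v : Γ} :
    v ∈ StabA x ↔ Function.Periodic x v := by
  refine ⟨fun h g => ?_, fun h => funext fun g => ?_⟩
  · simpa [ShiftA] using (congrFun h (g + v)).symm
  · simpa [ShiftA] using (h (-v + g)).symm

theorem stabA_comp_of_injective [AddGroup Γ] {f : α → β} (hf : f.Injective) (x : Γ → α) :
    StabA (f ∘ x) = StabA x := by
  ext v
  simp only [StabA, ShiftA, Set.mem_ofPred_eq, funext_iff, Function.comp_apply, hf.eq_iff]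

def mapPattern (f : α → β) (w : Finset Γ × (Γ → α)) : Finset Γ × (Γ → β) :=
  (w.1, f ∘ w.2)

theorem mem_SFTA_image_mapPattern [AddGroup Γ] (e : α ≃ β) (L : Set (Finset Γ × (Γ → α)))
    (x : Γ → β) : x ∈ SFTA (mapPattern e '' L) ↔ e.symm ∘ x ∈ SFTA L := by
  simp only [SFTA, ShiftA, Set.mem_ofPred_eq, Set.forall_mem_image, mapPattern,
    Function.comp_apply, ne_eq, ← e.symm_apply_eq]

end Shift

section Window

variable {Γ α : Type*} [DecidableEq Γ] [Inhabited α]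

/-- Words are filled in with `default` outside `D`, where they are never read. -/
def windowPatterns (D : Finset Γ) (ok : (D → α) → Prop) : Set (Finset Γ × (Γ → α)) :=
  (fun t : D → α => (D, fun g => if h : g ∈ D then t ⟨g, h⟩ else default)) '' {t | ¬ ok t}

theorem windowPatterns_finite [Finite α] (D : Finset Γ) (ok : (D → α) → Prop) :
    (windowPatterns D ok).Finite :=
  (Set.toFinite _).image _

theorem mem_SFTA_windowPatterns [AddGroup Γ] {D : Finset Γ} {ok : (D → α) → Prop} {x : Γ → α} :
    x ∈ SFTA (windowPatterns D ok) ↔ ∀ g, ok fun k : D => x (g + k) := by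
  constructor
  · intro hx g
    by_contra hbad
    obtain ⟨k, hk, hne⟩ := hx (-g) _ ⟨_, hbad, rfl⟩
    simp [ShiftA, hk] at hne
  · rintro hx g _ ⟨t, ht, rfl⟩
    by_contra! hall
    exact ht (by convert hx (-g) using 2 with k; simpa [ShiftA] using (hall k k.2).symm)

end Window

/-- A tile of row `j` reads the digit `digit`, multiplies it by `multiplier mult ∈ {2, 1/3}`,
takes in the carry encoded by `left` and passes on the carry encoded by `right`; the tile above
must carry the result `out` as its digit. -/
structure Tile where
  mult : Bool
  digit : Fin 3
  left : Fin 3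
  right : Fin 3
deriving DecidableEq, Fintype, Inhabited

def multiplier (b : Bool) : ℚ := if b then 2 else 1 / 3

namespace Tile

def carry (b : Bool) (k : Fin 3) : ℚ := if b then -(k : ℚ) else k / 3

def out (t : Tile) : ℚ :=
  multiplier t.mult * t.digit + carry t.mult t.left - carry t.mult t.right

def Allowed (a b c u : Tile) : Prop :=
  b.mult = a.mult ∧ b.left = a.right ∧ (u.digit : ℚ) = a.out ∧
    0 < (a.digit : ℕ) + b.digit + c.digit

theorem abs_carry_le (b : Bool) (k : Fin 3) : |carry b k| ≤ 2 := by
  have hk : (k : ℚ) ≤ 2 := by exact_mod_cast Nat.le_of_lt_succ k.isLt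
  have hk0 : (0 : ℚ) ≤ k := k.val.cast_nonneg
  unfold carry
  split_ifs <;> rw [abs_le] <;> constructor <;> linarith

end Tile

theorem abs_multiplier_le (b : Bool) : |multiplier b| ≤ 2 := by
  unfold multiplier
  split_ifs <;> norm_num [abs_of_pos]

def IsValid (z : ℤ × ℤ → Tile) : Prop :=
  ∀ i j, Tile.Allowed (z (i, j)) (z (i + 1, j)) (z (i + 2, j)) (z (i, j + 1))

def tileWindow : Finset (ℤ × ℤ) := {(0, 0), (1, 0), (2, 0), (0, 1)}

def tilePatterns : Set (Finset (ℤ × ℤ) × (ℤ × ℤ → Tile)) :=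
  windowPatterns tileWindow fun t =>
    Tile.Allowed (t ⟨(0, 0), by decide⟩) (t ⟨(1, 0), by decide⟩) (t ⟨(2, 0), by decide⟩)
      (t ⟨(0, 1), by decide⟩)

theorem mem_SFTA_tilePatterns {z : ℤ × ℤ → Tile} : z ∈ SFTA tilePatterns ↔ IsValid z := by
  simp [tilePatterns, mem_SFTA_windowPatterns, IsValid, Prod.forall]

theorem prod_multiplier_ne_one (b : ℕ → Bool) {t : ℕ} (ht : t ≠ 0) :
    ∏ k ∈ range t, multiplier (b k) ≠ 1 := by
  have hform : ∀ t, ∃ A B : ℕ, A + B = t ∧ (∏ k ∈ range t, multiplier (b k)) * 3 ^ B = 2 ^ A := by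
    intro t
    induction t with
    | zero => exact ⟨0, 0, rfl, by simp⟩
    | succ t ih =>
      obtain ⟨A, B, hAB, h⟩ := ih
      rw [prod_range_succ]
      cases b t
      · refine ⟨A, B + 1, by omega, ?_⟩
        rw [← h, pow_succ, multiplier, if_neg Bool.false_ne_true]
        ring
      · exact ⟨A + 1, B, by omega, by rw [pow_succ, ← h, multiplier, if_pos rfl]; ring⟩
  intro h1
  obtain ⟨A, B, hAB, h⟩ := hform t
  rw [h1, one_mul] at h
  have hpow : 3 ^ B = 2 ^ A := by exact_mod_cast h
  have hA : A = 0 := by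
    by_contra hA
    have heven : Even (3 ^ B) := hpow ▸ Nat.even_pow.2 ⟨even_two, hA⟩
    exact Nat.not_even_iff_odd.2 (Odd.pow (by decide)) heven
  subst hA
  have hB : B = 0 := by simpa using hpow
  omega

theorem eq_prod_mul_of_forall_succ {M : Type*} [CommMonoid M] {u r : ℕ → M}
    (hu : ∀ t, u (t + 1) = r t * u t) (t : ℕ) : u t = (∏ k ∈ range t, r k) * u 0 := by
  induction t with
  | zero => simp
  | succ t ih => rw [hu, ih, prod_range_succ, mul_comm _ (r t), mul_assoc]

theorem abs_sub_prod_mul_le {K : Type*} [CommRing K] [LinearOrder K] [IsStrictOrderedRing K]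
    {u r e : ℕ → K} {R E : K} (hu : ∀ t, u (t + 1) = r t * u t + e t)
    (hr : ∀ t, |r t| ≤ R) (he : ∀ t, |e t| ≤ E) (t : ℕ) :
    |u t - (∏ k ∈ range t, r k) * u 0| ≤ E * ∑ k ∈ range t, R ^ k := by
  induction t with
  | zero => simp
  | succ t ih =>
    have hR : 0 ≤ R := (abs_nonneg _).trans (hr 0)
    calc |u (t + 1) - (∏ k ∈ range (t + 1), r k) * u 0|
        = |r t * (u t - (∏ k ∈ range t, r k) * u 0) + e t| := by
          rw [hu, prod_range_succ]; ring_nf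
      _ ≤ R * (E * ∑ k ∈ range t, R ^ k) + E := by
          refine (abs_add_le _ _).trans (add_le_add ?_ (he t))
          rw [abs_mul]
          exact mul_le_mul (hr t) ih (abs_nonneg _) hR
      _ = E * ∑ k ∈ range (t + 1), R ^ k := by
          rw [sum_range_succ', mul_add, mul_sum, mul_sum, mul_sum]
          simp only [pow_succ, pow_zero]
          ring_nf

def windowSum (f : ℤ → ℕ) (m : ℤ) (l : ℕ) : ℕ := ∑ k ∈ range l, f (m + k)

section WindowSum

variable {f : ℤ → ℕ}

theorem windowSum_add (f : ℤ → ℕ) (m : ℤ) (l l' : ℕ) :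
    windowSum f m (l + l') = windowSum f m l + windowSum f (m + l) l' := by
  simp [windowSum, sum_range_add, add_assoc]

theorem windowSum_le {M : ℕ} (hf : ∀ i, f i ≤ M) (m : ℤ) (l : ℕ) : windowSum f m l ≤ M * l := by
  simpa [windowSum, mul_comm] using
    sum_le_card_nsmul (range l) (fun k : ℕ => f (m + k)) M fun k _ => hf _

theorem abs_windowSum_add_sub_le {M : ℕ} (hf : ∀ i, f i ≤ M) (m p : ℤ) (l : ℕ) :
    |(windowSum f (m + p) l : ℤ) - windowSum f m l| ≤ M * |p| := by
  have key : ∀ (m : ℤ) (n : ℕ), |(windowSum f (m + n) l : ℤ) - windowSum f m l| ≤ M * n := by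
    intro m n
    have h1 := windowSum_add f m n l
    have h2 := windowSum_add f m l n
    rw [add_comm n l] at h1
    have b1 := windowSum_le hf (m + l) n
    have b2 := windowSum_le hf m n
    rw [abs_le]
    constructor <;> zify at h1 h2 b1 b2 <;> linarith
  obtain ⟨n, rfl | rfl⟩ := Int.eq_nat_or_neg p
  · simpa using key m n
  · simpa [abs_sub_comm, ← sub_eq_add_neg] using key (m - n) n

theorem le_windowSum_three_mul (hf : ∀ i, 0 < f i + f (i + 1) + f (i + 2)) (m : ℤ) (n : ℕ) :
    n ≤ windowSum f m (3 * n) := by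
  induction n with
  | zero => simp
  | succ n ih =>
    have h3 : windowSum f (m + (3 * n : ℕ)) 3 =
        f (m + (3 * n : ℕ)) + f (m + (3 * n : ℕ) + 1) + f (m + (3 * n : ℕ) + 2) := by
      simp [windowSum, sum_range_succ, add_assoc]
    rw [mul_add_one, windowSum_add, h3]
    have := hf (m + (3 * n : ℕ))
    omega

end WindowSum

def digitRow (z : ℤ × ℤ → Tile) (j : ℤ) (i : ℤ) : ℕ := (z (i, j)).digit

def carryIn (z : ℤ × ℤ → Tile) (i j : ℤ) : ℚ := Tile.carry (z (i, j)).mult (z (i, j)).left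

theorem abs_carryIn_sub_carryIn_le (z : ℤ × ℤ → Tile) (i i' j : ℤ) :
    |carryIn z i j - carryIn z i' j| ≤ 4 := by
  have := Tile.abs_carry_le (z (i, j)).mult (z (i, j)).left
  have := Tile.abs_carry_le (z (i', j)).mult (z (i', j)).left
  exact (abs_sub _ _).trans (by unfold carryIn; linarith)

namespace IsValid

variable {z : ℤ × ℤ → Tile}

theorem mult_eq (hz : IsValid z) (i j : ℤ) : (z (i, j)).mult = (z (0, j)).mult := by
  induction i using Int.induction_on with
  | zero => rfl
  | succ i ih => rw [(hz i j).1, ih]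
  | pred i ih => rw [← ih, ← (hz (-i - 1) j).1, sub_add_cancel]

theorem digit_succ (hz : IsValid z) (i j : ℤ) :
    ((z (i, j + 1)).digit : ℚ) =
      multiplier (z (0, j)).mult * (z (i, j)).digit + carryIn z i j - carryIn z (i + 1) j := by
  obtain ⟨hmult, hcarry, hdigit, -⟩ := hz i j
  rw [hdigit, Tile.out, carryIn, carryIn, hmult, hcarry, hz.mult_eq]

theorem windowSum_succ (hz : IsValid z) (j m : ℤ) (l : ℕ) :
    (windowSum (digitRow z (j + 1)) m l : ℚ) =
      multiplier (z (0, j)).mult * windowSum (digitRow z j) m l + carryIn z m j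
        - carryIn z (m + l) j := by
  have htelescope := sum_range_sub' (fun k : ℕ => carryIn z (m + k) j) l
  push_cast [sum_sub_distrib, ← add_assoc, add_zero] at htelescope
  simp only [windowSum, digitRow, Nat.cast_sum, hz.digit_succ, sum_sub_distrib, sum_add_distrib,
    ← mul_sum]
  linarith

theorem le_windowSum_three_mul (hz : IsValid z) (j m : ℤ) (n : ℕ) :
    n ≤ windowSum (digitRow z j) m (3 * n) :=
  _root_.le_windowSum_three_mul (fun i => by simpa [digitRow, add_assoc] using (hz i j).2.2.2) m n

theorem abs_windowSum_sub_prod_mul_le (hz : IsValid z) (m : ℤ) (l t : ℕ) :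
    |(windowSum (digitRow z t) m l : ℚ) -
        (∏ k ∈ range t, multiplier (z (0, k)).mult) * windowSum (digitRow z 0) m l| ≤
      4 * ∑ k ∈ range t, (2 : ℚ) ^ k := by
  simpa using abs_sub_prod_mul_le (u := fun t : ℕ => (windowSum (digitRow z t) m l : ℚ))
    (r := fun t => multiplier (z (0, t)).mult) (e := fun t => carryIn z m t - carryIn z (m + l) t)
    (fun t => by simpa [add_sub_assoc] using hz.windowSum_succ t m l)
    (fun t => abs_multiplier_le _) (fun t => abs_carryIn_sub_carryIn_le z _ _ _) t

theorem not_periodic_of_snd_ne_zero (hz : IsValid z) {p h : ℤ} (hh : h ≠ 0)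
    (hper : Function.Periodic z (p, h)) : False := by
  wlog hpos : 0 < h generalizing p h
  · exact this (p := -p) (h := -h) (neg_ne_zero.2 hh) (by simpa using hper.neg) (by omega)
  lift h to ℕ using hpos.le
  set Q : ℚ := ∏ k ∈ range h, multiplier (z (0, k)).mult
  set C : ℚ := 4 * ∑ k ∈ range h, (2 : ℚ) ^ k + 2 * |(p : ℚ)|
  have hQ : 0 < |Q - 1| := abs_pos.2 (sub_ne_zero.2 (prod_multiplier_ne_one _ (by omega)))
  have hbound (n : ℕ) : |Q - 1| * n ≤ C := by
    have hperiod : windowSum (digitRow z h) p (3 * n) = windowSum (digitRow z 0) 0 (3 * n) := by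
      refine sum_congr rfl fun k _ => ?_
      simp only [digitRow, zero_add]
      rw [← hper (k, 0), Prod.mk_add_mk, zero_add, add_comm]
    have hdrift := hz.abs_windowSum_sub_prod_mul_le p (3 * n) h
    have hshift := abs_windowSum_add_sub_le (fun i => Nat.le_of_lt_succ (z (i, 0)).digit.isLt)
      0 p (3 * n)
    have hn := hz.le_windowSum_three_mul 0 p n
    rw [hperiod] at hdrift
    rw [zero_add] at hshift
    set W : ℕ := windowSum (digitRow z 0) p (3 * n)
    set V : ℕ := windowSum (digitRow z 0) 0 (3 * n)
    have hshiftQ : |(V : ℚ) - W| ≤ 2 * |(p : ℚ)| := by rw [abs_sub_comm]; exact_mod_cast hshift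
    calc |Q - 1| * n ≤ |Q - 1| * W := by gcongr
      _ = |(Q - 1) * W| := by rw [abs_mul, Nat.abs_cast]
      _ = |(Q * W - V) + (V - W)| := by ring_nf
      _ ≤ C := (abs_add_le _ _).trans (by rw [abs_sub_comm] at hdrift; linarith)
  obtain ⟨n, hn⟩ := exists_nat_gt (C / |Q - 1|)
  rw [div_lt_iff₀ hQ] at hn
  linarith [hbound n]

theorem not_periodic_of_fst_ne_zero (hz : IsValid z) {p : ℤ} (hp : p ≠ 0)
    (hper : Function.Periodic z (p, 0)) : False := by
  wlog hpos : 0 < p generalizing p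
  · exact this (p := -p) (neg_ne_zero.2 hp) (by simpa using hper.neg) (by omega)
  lift p to ℕ using hpos.le
  -- Over a window of `3 p` whole periods the carries cancel exactly.
  set s : ℕ → ℕ := fun t => windowSum (digitRow z t) 0 (3 * p)
  have hs : ∀ t, (s (t + 1) : ℚ) = multiplier (z (0, t)).mult * s t := by
    intro t
    have hrow : Function.Periodic (fun i => z (i, t)) p := fun i => hper (i, t)
    have hcarry : carryIn z (3 * p) t = carryIn z 0 t := by
      simpa [carryIn] using congrArg (fun a => Tile.carry a.mult a.left) ((hrow.nat_mul 3) 0)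
    simpa [s, hcarry] using hz.windowSum_succ t 0 (3 * p)
  have hpos : ∀ t, 0 < s t := fun t => lt_of_lt_of_le (by omega) (hz.le_windowSum_three_mul t 0 p)
  obtain ⟨a, b, hab, hsab⟩ := Set.Finite.exists_lt_map_eq_of_forall_mem (f := s)
    (fun t => Set.mem_Iic.2 (windowSum_le (fun i => Nat.le_of_lt_succ (z (i, t)).digit.isLt) 0 _))
    (Set.finite_Iic _)
  have hprod := eq_prod_mul_of_forall_succ (u := fun t => (s (a + t) : ℚ))
    (r := fun k => multiplier (z (0, ↑(a + k))).mult) (fun t => hs (a + t)) (b - a)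
  simp only [add_zero, Nat.add_sub_cancel' hab.le, hsab] at hprod
  exact prod_multiplier_ne_one _ (Nat.sub_ne_zero_of_lt hab)
    ((mul_eq_right₀ (by exact_mod_cast (hpos b).ne')).1 hprod.symm)

theorem stabA_eq (hz : IsValid z) : StabA z = {0} := by
  refine Set.eq_singleton_iff_unique_mem.2 ⟨mem_stabA_iff_periodic.2 fun g => by simp, ?_⟩
  rintro ⟨p, h⟩ hv
  rw [mem_stabA_iff_periodic] at hv
  by_cases hh : h = 0
  · subst hh
    by_cases hp : p = 0
    · rw [hp, Prod.mk_zero_zero]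
    · exact (hz.not_periodic_of_fst_ne_zero hp hv).elim
  · exact (hz.not_periodic_of_snd_ne_zero hh hv).elim

end IsValid

def rescale : Equiv.Perm (Set.Ico (1 / 3 : ℚ) 2) where
  toFun y := ⟨multiplier (decide ((y : ℚ) < 1)) * y, by
    obtain ⟨y, h1, h2⟩ := y
    rw [Set.mem_Ico]
    by_cases h : y < 1 <;> simp only [multiplier, h, decide_true, decide_false] <;> norm_num <;>
      constructor <;> linarith⟩
  invFun y := ⟨if 2 / 3 ≤ (y : ℚ) then y / 2 else 3 * y, by
    obtain ⟨y, h1, h2⟩ := y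
    rw [Set.mem_Ico]
    split_ifs <;> constructor <;> linarith⟩
  left_inv y := by
    obtain ⟨y, h1, h2⟩ := y
    ext
    by_cases h : y < 1
    · simp only [multiplier, h, decide_true, if_true]
      rw [if_pos (by linarith)]; ring
    · simp only [multiplier, h, decide_false, Bool.false_eq_true, if_false]
      rw [if_neg (by linarith)]; ring
  right_inv y := by
    obtain ⟨y, h1, h2⟩ := y
    ext
    by_cases h : (2 : ℚ) / 3 ≤ y
    · simp only [h, if_true, multiplier, show y / 2 < 1 by linarith, decide_true]; ring
    · simp only [h, if_false, multiplier, show ¬3 * y < 1 by linarith, decide_false,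
        Bool.false_eq_true]; ring

theorem exists_multiplier_orbit : ∃ (y : ℤ → Set.Ico (1 / 3 : ℚ) 2) (b : ℤ → Bool),
    ∀ j, (y (j + 1) : ℚ) = multiplier (b j) * y j := by
  refine ⟨fun j => (rescale ^ j) ⟨1, by norm_num⟩,
    fun j => decide (((rescale ^ j) ⟨1, by norm_num⟩ : ℚ) < 1), fun j => ?_⟩
  dsimp only
  rw [add_comm, zpow_one_add, Equiv.Perm.mul_apply]
  rfl

theorem exists_fin_three_cast_eq {n : ℤ} (h0 : 0 ≤ n) (h2 : n ≤ 2) : ∃ k : Fin 3, (k : ℚ) = n := by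
  interval_cases n
  exacts [⟨0, by simp⟩, ⟨1, by simp⟩, ⟨2, by norm_num⟩]

theorem exists_carry_eq (b : Bool) (x : ℚ) :
    ∃ k : Fin 3, Tile.carry b k = multiplier b * ⌊x⌋ - ⌊multiplier b * x⌋ := by
  cases b
  · have hdiv : ⌊x / 3⌋ = ⌊x⌋ / 3 := by exact_mod_cast Int.floor_div_natCast x 3
    obtain ⟨k, hk⟩ := exists_fin_three_cast_eq (Int.emod_nonneg ⌊x⌋ (by norm_num : (3 : ℤ) ≠ 0))
      (by have := Int.emod_lt_of_pos ⌊x⌋ (by norm_num : (0 : ℤ) < 3); omega)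
    refine ⟨k, ?_⟩
    have hmod : ((⌊x⌋ % 3 : ℤ) : ℚ) = ⌊x⌋ - 3 * ((⌊x⌋ / 3 : ℤ) : ℚ) := by
      rw [Int.emod_def]; push_cast; ring
    simp only [Tile.carry, multiplier, one_div, Bool.false_eq_true, if_false, hk, hmod,
      inv_mul_eq_div, hdiv]
    ring
  · have hlo : 2 * ⌊x⌋ ≤ ⌊2 * x⌋ := Int.le_floor.2 (by push_cast; linarith [Int.floor_le x])
    have hhi : ⌊2 * x⌋ < 2 * ⌊x⌋ + 2 :=
      Int.floor_lt.2 (by push_cast; linarith [Int.lt_floor_add_one x])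
    obtain ⟨k, hk⟩ := exists_fin_three_cast_eq (n := ⌊2 * x⌋ - 2 * ⌊x⌋) (by omega) (by omega)
    refine ⟨k, ?_⟩
    simp only [Tile.carry, multiplier, if_true, hk]
    push_cast
    ring

theorem exists_digit_eq (y : Set.Ico (1 / 3 : ℚ) 2) (i : ℤ) :
    ∃ k : Fin 3, (k : ℚ) = ⌊i * (y : ℚ)⌋ - ⌊(i - 1) * (y : ℚ)⌋ := by
  obtain ⟨y, h1, h2⟩ := y
  have hlo : ⌊(i - 1) * y⌋ ≤ ⌊i * y⌋ := Int.floor_le_floor (by nlinarith)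
  have hhi : ⌊i * y⌋ ≤ ⌊(i - 1) * y⌋ + 2 := by
    rw [← Int.floor_add_intCast]
    exact Int.floor_le_floor (by push_cast; nlinarith)
  obtain ⟨k, hk⟩ := exists_fin_three_cast_eq (n := ⌊i * y⌋ - ⌊(i - 1) * y⌋) (by omega) (by omega)
  exact ⟨k, by rw [hk]; push_cast; ring⟩

noncomputable def carryCode (b : Bool) (x : ℚ) : Fin 3 := (exists_carry_eq b x).choose

noncomputable def digitCode (y : Set.Ico (1 / 3 : ℚ) 2) (i : ℤ) : Fin 3 :=
  (exists_digit_eq y i).choose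

noncomputable def beattyTiling (y : ℤ → Set.Ico (1 / 3 : ℚ) 2) (b : ℤ → Bool) (g : ℤ × ℤ) :
    Tile where
  mult := b g.2
  digit := digitCode (y g.2) g.1
  left := carryCode (b g.2) ((g.1 - 1) * y g.2)
  right := carryCode (b g.2) (g.1 * y g.2)

theorem isValid_beattyTiling {y : ℤ → Set.Ico (1 / 3 : ℚ) 2} {b : ℤ → Bool}
    (hy : ∀ j, (y (j + 1) : ℚ) = multiplier (b j) * y j) : IsValid (beattyTiling y b) := by
  have hdigit (j i : ℤ) : (digitCode (y j) i : ℚ) = ⌊i * (y j : ℚ)⌋ - ⌊(i - 1) * (y j : ℚ)⌋ :=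
    (exists_digit_eq (y j) i).choose_spec
  have hcarry (b : Bool) (x : ℚ) :
      Tile.carry b (carryCode b x) = multiplier b * ⌊x⌋ - ⌊multiplier b * x⌋ :=
    (exists_carry_eq b x).choose_spec
  intro i j
  refine ⟨rfl, by simp [beattyTiling], ?_, ?_⟩
  · simp only [beattyTiling, Tile.out, hdigit, hcarry, hy, mul_left_comm (multiplier (b j))]
    ring
  · have hsum : ((digitCode (y j) i : ℕ) : ℚ) + digitCode (y j) (i + 1) +
        digitCode (y j) (i + 2) = ⌊(i + 2) * (y j : ℚ)⌋ - ⌊(i - 1) * (y j : ℚ)⌋ := by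
      simp only [hdigit]; push_cast; ring_nf
    have hgap : ⌊(i - 1) * (y j : ℚ)⌋ + 1 ≤ ⌊(i + 2) * (y j : ℚ)⌋ := by
      rw [← Int.floor_add_one]
      exact Int.floor_le_floor (by nlinarith [(y j).2.1])
    show 0 < (digitCode (y j) i : ℕ) + digitCode (y j) (i + 1) + digitCode (y j) (i + 2)
    rw [← Nat.cast_pos (α := ℚ), Nat.cast_add, Nat.cast_add, hsum]
    have hgapQ : ((⌊(i - 1) * (y j : ℚ)⌋ + 1 : ℤ) : ℚ) ≤ ⌊(i + 2) * (y j : ℚ)⌋ := by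
      exact_mod_cast hgap
    push_cast at hgapQ
    linarith

theorem exists_isValid : ∃ z : ℤ × ℤ → Tile, IsValid z :=
  let ⟨_, _, hy⟩ := exists_multiplier_orbit
  ⟨_, isValid_beattyTiling hy⟩

/-- There is a strongly aperiodic SFT on `ℤ²`: a nonempty finite alphabet `Fin m` and a
finite set `L` of patterns over `ℤ × ℤ` whose SFT `X` is nonempty with `Stab(x) = {0}`
for every `x ∈ X`. -/
theorem stmt_16 :
    ∃ (m : ℕ) (_ : 0 < m) (L : Set (Finset (ℤ × ℤ) × ((ℤ × ℤ) → Fin m))),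
      L.Finite ∧ (SFTA L).Nonempty ∧
        ∀ x ∈ SFTA L, StabA x = ({0} : Set (ℤ × ℤ)) := by
  obtain ⟨z, hz⟩ := exists_isValid
  let e := Fintype.equivFin Tile
  refine ⟨Fintype.card Tile, Fintype.card_pos, mapPattern e '' tilePatterns,
    (windowPatterns_finite _ _).image _, ⟨e ∘ z, ?_⟩, fun x hx => ?_⟩
  · rwa [mem_SFTA_image_mapPattern, ← Function.comp_assoc, e.symm_comp_self, Function.id_comp,
      mem_SFTA_tilePatterns]
  · rw [mem_SFTA_image_mapPattern, mem_SFTA_tilePatterns] at hx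
    rw [← stabA_comp_of_injective e.symm.injective, hx.stabA_eq]
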